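/- arXiv:1110.0626 — 2 statements merged into one kernel-verified Lean document; each statement's English description precedes it below -/
import Mathlib

section
/- Let A > 0, γ > 1, ρ₀ > 0, q₀ ∈ ℝ, s₀ ∈ ℝ, and define F(x) = (Aγ/(γ−1))·x^(γ+1) − (Aγ/(γ−1))·ρ₀^(γ−1)·x² + (s₀²q₀²/(2(1+s₀²)))·(ρ₀² − x²) for x > 0. Assume the entropy condition Aγρ₀^(γ−1) < s₀²q₀²/(1+s₀²). If ρ⁺ > 0 satisfies F(ρ⁺) = 0 and ρ⁺ ≠ ρ₀, then ρ⁺ > ρ₀. -/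
/-- Under Lax's entropy condition `c²(ρ₀) < s₀²q₀²/(1+s₀²)`, any positive zero of the
shock-polar function `F` other than `ρ₀` lies above `ρ₀`: the density increases across
the shock. -/
theorem stmt3 (A γ ρ₀ q₀ s₀ ρp : ℝ) (hA : 0 < A) (hγ : 1 < γ) (hρ₀ : 0 < ρ₀)
    (hentropy : A * γ * ρ₀ ^ (γ - 1) < s₀ ^ 2 * q₀ ^ 2 / (1 + s₀ ^ 2))
    (hρp : 0 < ρp)
    (hF : (A * γ / (γ - 1)) * ρp ^ (γ + 1) - (A * γ / (γ - 1)) * ρ₀ ^ (γ - 1) * ρp ^ 2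
      + (s₀ ^ 2 * q₀ ^ 2 / (2 * (1 + s₀ ^ 2))) * (ρ₀ ^ 2 - ρp ^ 2) = 0)
    (hne : ρp ≠ ρ₀) :
    ρ₀ < ρp := by
  by_contra hlt
  push_neg at hlt
  have h : ρp < ρ₀ := lt_of_le_of_ne hlt hne
  have hγ1 : (0:ℝ) < γ - 1 := by linarith
  have hden : (0:ℝ) < 1 + s₀ ^ 2 := by positivity
  set B : ℝ := A * γ / (γ - 1) with hBdef
  have hBpos : 0 < B := by positivity
  have hBγ : B * (γ - 1) = A * γ := by
    rw [hBdef]; field_simp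
  set S : ℝ := s₀ ^ 2 * q₀ ^ 2 / (1 + s₀ ^ 2) with hSdef
  set u : ℝ := (ρp / ρ₀) ^ 2 with hudef
  have ht0 : 0 < ρp / ρ₀ := by positivity
  have ht1 : ρp / ρ₀ < 1 := (div_lt_one hρ₀).2 h
  have hu0 : 0 < u := by positivity
  have hu1 : u < 1 := by nlinarith
  set p : ℝ := (γ - 1) / 2 + 1 with hpdef
  have hp1 : (1:ℝ) ≤ p := by rw [hpdef]; linarith
  -- Bernoulli inequality
  have hbern : 1 + p * (u - 1) ≤ u ^ p := by
    have := one_add_mul_self_le_rpow_one_add (s := u - 1) (by linarith) hp1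
    simpa using this
  -- key power identities
  have hE : (0:ℝ) < ρ₀ ^ (γ - 1) := Real.rpow_pos_of_pos hρ₀ _
  have hP1 : ρ₀ ^ (γ + 1) = ρ₀ ^ (γ - 1) * ρ₀ ^ 2 := by
    rw [show γ + (1:ℝ) = (γ - 1) + 2 by ring, Real.rpow_add hρ₀, Real.rpow_two]
  have hup : u ^ p = (ρp / ρ₀) ^ (γ + 1) := by
    rw [hudef, ← Real.rpow_natCast (ρp / ρ₀) 2, ← Real.rpow_mul ht0.le]
    congr 1; rw [hpdef]; ring
  have hPne : ρ₀ ^ (γ + 1) ≠ 0 := (Real.rpow_pos_of_pos hρ₀ _).ne'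
  have hρppow : ρp ^ (γ + 1) = ρ₀ ^ (γ - 1) * ρ₀ ^ 2 * u ^ p := by
    rw [hup, Real.div_rpow hρp.le hρ₀.le, ← hP1]
    field_simp
  have hρp2 : ρp ^ 2 = ρ₀ ^ 2 * u := by
    rw [hudef]; field_simp
  have hS2 : s₀ ^ 2 * q₀ ^ 2 / (2 * (1 + s₀ ^ 2)) = S / 2 := by
    rw [hSdef, div_div]; ring_nf
  rw [hρppow, hρp2, hS2] at hF
  have hSpos : 0 < S := lt_trans (by positivity) hentropy
  have hρ₀2 : (0:ℝ) < ρ₀ ^ 2 := by positivity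
  have h1 := mul_le_mul_of_nonneg_left hbern
    (le_of_lt (mul_pos hBpos (mul_pos hE hρ₀2)))
  have h2 : 0 < (S - A * γ * ρ₀ ^ (γ - 1)) * (ρ₀ ^ 2 * (1 - u)) :=
    mul_pos (by linarith) (mul_pos hρ₀2 (by linarith))
  have hBγE : B * (γ - 1) * ρ₀ ^ (γ - 1) * (ρ₀ ^ 2 * (1 - u))
      = A * γ * ρ₀ ^ (γ - 1) * (ρ₀ ^ 2 * (1 - u)) := by rw [hBγ]
  rw [hpdef] at h1
  nlinarith [h1, h2, hBγE, hF]
end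

section
/- Let μ < 0, T ≥ 1, and let f : ℝ → ℝ be continuously differentiable on [1, T]. Then ∫₁^T z^(μ−1)·f(z)² dz ≤ (2/|μ|)·f(1)² + (4/μ²)·∫₁^T z^(μ+1)·f'(z)² dz. -/
/-!
Integrate by parts against `(z ^ μ / μ)' = z ^ (μ - 1)`. Since `μ < 0`, the boundary term at
the right end point is `≤ 0` and the one at the left end point is `a ^ μ f(a)² / |μ|`. The
remaining cross term `-(2 / μ) ∫ z ^ μ f f'` is absorbed by Young's inequality into half of the
left-hand side plus `(2 / μ²) ∫ z ^ (μ + 1) f'²`.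
-/

open Set intervalIntegral
open MeasureTheory (volume)

lemma neg_rpow_div_mul_two_mul_le {μ z : ℝ} (hμ : μ ≠ 0) (hz : 0 < z) (x y : ℝ) :
    -(z ^ μ / μ * (2 * x * y))
      ≤ 1 / 2 * (z ^ (μ - 1) * x ^ 2) + 2 / μ ^ 2 * (z ^ (μ + 1) * y ^ 2) := by
  rw [Real.rpow_sub_one hz.ne', Real.rpow_add_one hz.ne']
  have hsq :
      1 / 2 * (z ^ μ / z * x ^ 2) + 2 / μ ^ 2 * (z ^ μ * z * y ^ 2) + z ^ μ / μ * (2 * x * y)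
        = z ^ μ / (2 * z) * (x + 2 * z * y / μ) ^ 2 := by
    field_simp
    ring
  have hnonneg : 0 ≤ z ^ μ / (2 * z) * (x + 2 * z * y / μ) ^ 2 := by positivity
  linarith

lemma continuousOn_rpow_const_Icc {a b : ℝ} (ha : 0 < a) (p : ℝ) :
    ContinuousOn (fun z : ℝ => z ^ p) (Icc a b) :=
  continuousOn_id.rpow_const fun _ hz => Or.inl (ha.trans_le hz.1).ne'

section Hardy

variable {μ a b : ℝ} {f f' : ℝ → ℝ}

lemma integral_rpow_sub_one_mul_sq_eq (hμ : μ ≠ 0) (ha : 0 < a) (hab : a ≤ b)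
    (hf : ∀ z ∈ Icc a b, HasDerivAt f (f' z) z) (hf' : ContinuousOn f' (Icc a b)) :
    ∫ z in a..b, z ^ (μ - 1) * f z ^ 2
      = b ^ μ / μ * f b ^ 2 - a ^ μ / μ * f a ^ 2
        - ∫ z in a..b, z ^ μ / μ * (2 * f z * f' z) := by
  have hfc : ContinuousOn f (Icc a b) :=
    continuousOn_of_forall_continuousAt fun z hz => (hf z hz).continuousAt
  have hu : ∀ z ∈ uIcc a b, HasDerivAt (fun z : ℝ => z ^ μ / μ) (z ^ (μ - 1)) z := by
    intro z hz
    rw [uIcc_of_le hab] at hz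
    simpa only [mul_div_cancel_left₀ _ hμ] using
      (Real.hasDerivAt_rpow_const (p := μ) (Or.inl (ha.trans_le hz.1).ne')).div_const μ
  have hv : ∀ z ∈ uIcc a b, HasDerivAt (fun z => f z ^ 2) (2 * f z * f' z) z := by
    intro z hz
    rw [uIcc_of_le hab] at hz
    simpa using (hf z hz).fun_pow 2
  have hibp := integral_mul_deriv_eq_deriv_mul hu hv
    ((continuousOn_rpow_const_Icc ha _).intervalIntegrable_of_Icc hab)
    (((continuousOn_const.mul hfc).mul hf').intervalIntegrable_of_Icc hab)
  linarith

lemma neg_integral_rpow_div_mul_le (hμ : μ ≠ 0) (ha : 0 < a) (hab : a ≤ b)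
    (hf : ∀ z ∈ Icc a b, HasDerivAt f (f' z) z) (hf' : ContinuousOn f' (Icc a b)) :
    -∫ z in a..b, z ^ μ / μ * (2 * f z * f' z)
      ≤ 1 / 2 * (∫ z in a..b, z ^ (μ - 1) * f z ^ 2)
        + 2 / μ ^ 2 * ∫ z in a..b, z ^ (μ + 1) * f' z ^ 2 := by
  have hfc : ContinuousOn f (Icc a b) :=
    continuousOn_of_forall_continuousAt fun z hz => (hf z hz).continuousAt
  have hiA : IntervalIntegrable (fun z => z ^ (μ - 1) * f z ^ 2) volume a b :=
    ((continuousOn_rpow_const_Icc ha _).mul (hfc.pow 2)).intervalIntegrable_of_Icc hab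
  have hiB : IntervalIntegrable (fun z => z ^ (μ + 1) * f' z ^ 2) volume a b :=
    ((continuousOn_rpow_const_Icc ha _).mul (hf'.pow 2)).intervalIntegrable_of_Icc hab
  have hiC : IntervalIntegrable (fun z => -(z ^ μ / μ * (2 * f z * f' z))) volume a b :=
    (((continuousOn_rpow_const_Icc ha _).div_const μ).mul
      ((continuousOn_const.mul hfc).mul hf')).neg.intervalIntegrable_of_Icc hab
  rw [← integral_neg, ← integral_const_mul, ← integral_const_mul,
    ← integral_add (hiA.const_mul _) (hiB.const_mul _)]
  exact integral_mono_on hab hiC ((hiA.const_mul _).add (hiB.const_mul _)) fun z hz =>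
    neg_rpow_div_mul_two_mul_le hμ (ha.trans_le hz.1) (f z) (f' z)

theorem integral_rpow_sub_one_mul_sq_le (hμ : μ < 0) (ha : 0 < a) (hab : a ≤ b)
    (hf : ∀ z ∈ Icc a b, HasDerivAt f (f' z) z) (hf' : ContinuousOn f' (Icc a b)) :
    ∫ z in a..b, z ^ (μ - 1) * f z ^ 2
      ≤ 2 / |μ| * a ^ μ * f a ^ 2 + 4 / μ ^ 2 * ∫ z in a..b, z ^ (μ + 1) * f' z ^ 2 := by
  have hibp := integral_rpow_sub_one_mul_sq_eq hμ.ne ha hab hf hf'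
  have hcross := neg_integral_rpow_div_mul_le hμ.ne ha hab hf hf'
  have hright : b ^ μ / μ * f b ^ 2 ≤ 0 :=
    mul_nonpos_of_nonpos_of_nonneg
      (div_nonpos_of_nonneg_of_nonpos (Real.rpow_nonneg (ha.le.trans hab) μ) hμ.le) (sq_nonneg _)
  have hleft : 2 / |μ| * a ^ μ * f a ^ 2 = -2 * (a ^ μ / μ * f a ^ 2) := by
    rw [abs_of_neg hμ]
    ring
  have hscale : 4 / μ ^ 2 * ∫ z in a..b, z ^ (μ + 1) * f' z ^ 2
      = 2 * (2 / μ ^ 2 * ∫ z in a..b, z ^ (μ + 1) * f' z ^ 2) := by ring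
  linarith

end Hardy

/-- One-dimensional Hardy-type inequality with weight `z^(μ−1)`, `μ < 0`, on `[1, T]`. -/
theorem stmt9 (μ T : ℝ) (hμ : μ < 0) (hT : 1 ≤ T) (f f' : ℝ → ℝ)
    (hf : ∀ z ∈ Icc (1 : ℝ) T, HasDerivAt f (f' z) z)
    (hf' : ContinuousOn f' (Icc (1 : ℝ) T)) :
    ∫ z in (1 : ℝ)..T, z ^ (μ - 1) * f z ^ 2
      ≤ (2 / |μ|) * f 1 ^ 2 + (4 / μ ^ 2) * ∫ z in (1 : ℝ)..T, z ^ (μ + 1) * f' z ^ 2 := by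
  simpa only [Real.one_rpow, mul_one] using
    integral_rpow_sub_one_mul_sq_le hμ one_pos hT hf hf'
end
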